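/- arXiv:2106.09145 — 6 statements merged into one kernel-verified Lean document; each statement's English description precedes it below -/
import Mathlib

section
/- Let Γ and Δ be groups, F ⊆ Γ a finite subset, and φ : F → Δ a local embedding (an injective map such that φ(gh) = φ(g)φ(h) whenever g, h, gh ∈ F). Suppose Δ₁, ..., Δ_m are finite subgroups of Γ with trivial center which generate their direct product in Γ, and all elements of each Δ_i and all products g_i·g_j (g_i ∈ Δ_i, g_j ∈ Δ_j) lie in F. Then the images φ(Δ₁), ..., φ(Δ_m) are subgroups of Δ generating their direct product, and |Δ| ≥ ∏_i |Δ_i|. -/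
/-!
A partial homomorphism is multiplicative on each `Δᵢ`, so it restricts to injective
homomorphisms `Δᵢ → Δ`; as products `gᵢ gⱼ` lie in `F`, it also carries the commutation of
different factors over to the images. Commuting centreless subgroups always generate their
direct product: if `∏ᵢ gᵢ = 1`, conjugating `h ∈ Δⱼ` by this product fixes it, and only the
factor `gⱼ` acts on `h`, so `gⱼ` is central in `Δⱼ`, hence trivial. The product map is thus an
embedding of `∏ᵢ φ(Δᵢ) ≅ ∏ᵢ Δᵢ` into `Δ`.
-/

open Function

def IsPartialHom {Γ Δ : Type*} [Mul Γ] [Mul Δ] (F : Set Γ) (φ : Γ → Δ) : Prop :=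
  ∀ g ∈ F, ∀ h ∈ F, g * h ∈ F → φ (g * h) = φ g * φ h

namespace IsPartialHom

variable {Γ Δ : Type*} {F : Set Γ} {φ : Γ → Δ}

theorem commute [Mul Γ] [Mul Δ] (hφ : IsPartialHom F φ) {g h : Γ} (hg : g ∈ F) (hh : h ∈ F)
    (hgh : g * h ∈ F) (hhg : h * g ∈ F) (hc : Commute g h) : Commute (φ g) (φ h) := by
  rw [Commute, SemiconjBy, ← hφ g hg h hh hgh, ← hφ h hh g hg hhg, hc.eq]

variable [Group Γ] [Group Δ]

def toMonoidHom (hφ : IsPartialHom F φ) (K : Subgroup Γ) (hK : (K : Set Γ) ⊆ F) : K →* Δ :=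
  MonoidHom.mk' (fun x => φ x) fun a b =>
    hφ a (hK a.2) b (hK b.2) (hK (K.mul_mem a.2 b.2))

variable (hφ : IsPartialHom F φ) {K : Subgroup Γ} (hK : (K : Set Γ) ⊆ F)

theorem injective_toMonoidHom (hinj : Set.InjOn φ F) : Injective (hφ.toMonoidHom K hK) :=
  fun a b hab => Subtype.ext (hinj (hK a.2) (hK b.2) hab)

theorem coe_range_toMonoidHom : ((hφ.toMonoidHom K hK).range : Set Δ) = φ '' K := by
  rw [MonoidHom.coe_range, Set.image_eq_range]
  rfl

end IsPartialHom

namespace Subgroup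

variable {G : Type*} [Group G]

theorem center_eq_bot_of_mulEquiv {G' : Type*} [Group G'] (e : G ≃* G') (h : center G = ⊥) :
    center G' = ⊥ := by
  refine eq_bot_iff.2 fun x hx => ?_
  have : e.symm x ∈ center G := MulEquivClass.apply_mem_center e.symm hx
  rw [h, mem_bot, MulEquiv.symm_apply_eq, map_one] at this
  exact this

theorem center_eq_bot_of_forall_commute {K : Subgroup G}
    (hK : ∀ g ∈ K, (∀ h ∈ K, Commute g h) → g = 1) : center K = ⊥ :=
  eq_bot_iff.2 fun g hg => Subtype.ext <| hK g g.2 fun h hh =>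
    congrArg Subtype.val ((mem_center_iff.1 hg ⟨h, hh⟩).symm)

variable {ι : Type*} [Fintype ι] {H : ι → Subgroup G}

theorem injective_noncommPiCoprod_of_center_eq_bot
    (hcomm : Pairwise fun i j : ι => ∀ x y : G, x ∈ H i → y ∈ H j → Commute x y)
    (hcenter : ∀ i, center (H i) = ⊥) : Injective (noncommPiCoprod hcomm) := by
  classical
  refine (injective_iff_map_eq_one _).2 fun g hg => funext fun j => ?_
  have hg_central : g j ∈ center (H j) := by
    refine mem_center_iff.2 fun h => ?_
    have hconj : g * Pi.mulSingle j h * g⁻¹ = Pi.mulSingle j (g j * h * (g j)⁻¹) :=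
      (Pi.mulSingle_op (fun i x => g i * x * (g i)⁻¹) (fun i => by group) j h).symm
    have hfix := congrArg (noncommPiCoprod hcomm) hconj
    simp only [map_mul, map_inv, hg, noncommPiCoprod_mulSingle, one_mul, inv_one,
      mul_one] at hfix
    exact eq_mul_inv_iff_mul_eq.1 (Subtype.ext hfix)
  simpa [hcenter j] using hg_central

theorem noncommPiCoprod_apply_eq_prod_ofFn {m : ℕ} {H : Fin m → Subgroup G}
    (hcomm : Pairwise fun i j : Fin m => ∀ x y : G, x ∈ H i → y ∈ H j → Commute x y)
    (f : ∀ i, H i) : noncommPiCoprod hcomm f = (List.ofFn fun i => (f i : G)).prod := by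
  simp only [noncommPiCoprod_apply, Finset.noncommProd, Fin.univ_val_map,
    Multiset.noncommProd_coe]

end Subgroup

open Subgroup

theorem stmt0_general {Γ Δ : Type*} [Group Γ] [Group Δ] (F : Finset Γ) (φ : Γ → Δ)
    (hinj : Set.InjOn φ (F : Set Γ))
    (hhom : ∀ g ∈ (F : Set Γ), ∀ h ∈ (F : Set Γ), g * h ∈ (F : Set Γ) →
      φ (g * h) = φ g * φ h)
    (m : ℕ) (D : Fin m → Subgroup Γ)
    (hcenterless : ∀ i, ∀ g ∈ D i, (∀ h ∈ D i, Commute g h) → g = 1)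
    (hcomm : ∀ i j, i ≠ j → ∀ g ∈ D i, ∀ h ∈ D j, Commute g h)
    (hmem : ∀ i, ∀ g ∈ D i, g ∈ (F : Set Γ))
    (hprodmem : ∀ i j, i ≠ j → ∀ g ∈ D i, ∀ h ∈ D j, g * h ∈ (F : Set Γ)) :
    (∃ E : Fin m → Subgroup Δ,
      (∀ i, (E i : Set Δ) = φ '' (D i : Set Γ)) ∧
      (∀ i j, i ≠ j → ∀ g ∈ E i, ∀ h ∈ E j, Commute g h) ∧
      Function.Injective (fun f : (∀ i, E i) => (List.ofFn fun i => (f i : Δ)).prod)) ∧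
    ((∏ i, Nat.card (D i) : ℕ) : Cardinal) ≤ Cardinal.mk Δ := by
  have hφ : IsPartialHom (F : Set Γ) φ := hhom
  let ψ i := hφ.toMonoidHom (D i) (hmem i)
  let e i : D i ≃* (ψ i).range := MonoidHom.ofInjective (hφ.injective_toMonoidHom _ hinj)
  have hEcomm : ∀ i j, i ≠ j → ∀ g ∈ (ψ i).range, ∀ h ∈ (ψ j).range, Commute g h := by
    rintro i j hij _ ⟨g, rfl⟩ _ ⟨h, rfl⟩
    exact hφ.commute (hmem i g g.2) (hmem j h h.2) (hprodmem i j hij g g.2 h h.2)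
      (hprodmem j i hij.symm h h.2 g g.2) (hcomm i j hij g g.2 h h.2)
  have hprod_inj := injective_noncommPiCoprod_of_center_eq_bot
    (fun i j hij x y hx hy => hEcomm i j hij x hx y hy)
    fun i => center_eq_bot_of_mulEquiv (e i) (center_eq_bot_of_forall_commute (hcenterless i))
  refine ⟨⟨fun i => (ψ i).range, fun i => hφ.coe_range_toMonoidHom (hmem i), hEcomm, ?_⟩, ?_⟩
  · convert hprod_inj using 1
    exact funext fun f => (noncommPiCoprod_apply_eq_prod_ofFn _ f).symm
  · calc ((∏ i, Nat.card (D i) : ℕ) : Cardinal)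
        = Nat.card (∀ i, (ψ i).range) := by
          rw [Nat.card_pi, Nat.cast_inj]
          exact Finset.prod_congr rfl fun i _ => Nat.card_congr (e i).toEquiv
      _ ≤ Cardinal.mk (∀ i, (ψ i).range) := Cardinal.natCast_toNat_le _
      _ ≤ Cardinal.mk Δ := Cardinal.mk_le_of_injective hprod_inj

/-- If `φ : F → Δ` is a local embedding of a finite subset `F` of a group `Γ`,
and `Δ₁, …, Δₘ ≤ Γ` are finite centreless subgroups generating their direct product, with
all their elements and pairwise products lying in `F`, then the images `φ(Δᵢ)` are subgroups
of `Δ` generating their direct product, and `|Δ| ≥ ∏ᵢ |Δᵢ|`. -/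
theorem stmt0 {Γ Δ : Type*} [Group Γ] [Group Δ] (F : Finset Γ) (φ : Γ → Δ)
    (hinj : Set.InjOn φ (F : Set Γ))
    (hhom : ∀ g ∈ (F : Set Γ), ∀ h ∈ (F : Set Γ), g * h ∈ (F : Set Γ) →
      φ (g * h) = φ g * φ h)
    (m : ℕ) (D : Fin m → Subgroup Γ)
    (hfin : ∀ i, Finite (D i))
    (hcenterless : ∀ i, ∀ g ∈ D i, (∀ h ∈ D i, Commute g h) → g = 1)
    (hcomm : ∀ i j, i ≠ j → ∀ g ∈ D i, ∀ h ∈ D j, Commute g h)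
    (hdirect : Function.Injective (fun f : (∀ i, D i) => (List.ofFn fun i => (f i : Γ)).prod))
    (hmem : ∀ i, ∀ g ∈ D i, g ∈ (F : Set Γ))
    (hprodmem : ∀ i j, i ≠ j → ∀ g ∈ D i, ∀ h ∈ D j, g * h ∈ (F : Set Γ)) :
    (∃ E : Fin m → Subgroup Δ,
      (∀ i, (E i : Set Δ) = φ '' (D i : Set Γ)) ∧
      (∀ i j, i ≠ j → ∀ g ∈ E i, ∀ h ∈ E j, Commute g h) ∧
      Function.Injective (fun f : (∀ i, E i) => (List.ofFn fun i => (f i : Δ)).prod)) ∧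
    ((∏ i, Nat.card (D i) : ℕ) : Cardinal) ≤ Cardinal.mk Δ :=
  stmt0_general F φ hinj hhom m D hcenterless hcomm hmem hprodmem
end

section
/- Let w : ℤ → A be an infinite word over a finite alphabet. If p_w(n) ≤ n for some n ≥ 1, then w is periodic, i.e., there exists k ≥ 1 with w_{i+k} = w_i for all i ∈ ℤ. -/
/-- The set of `n`-factors of a two-sided infinite word `w`. -/
def factorsZ {A : Type*} (w : ℤ → A) (n : ℕ) : Set (Fin n → A) :=
  {u | ∃ k : ℤ, ∀ i : Fin n, u i = w (k + (i : ℤ))}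

/-- The complexity function of a two-sided infinite word. -/
noncomputable def complexityZ {A : Type*} (w : ℤ → A) (n : ℕ) : ℕ :=
  Nat.card (factorsZ w n)

/-- `u` occurs in the length-`M` window of `w` starting at `k`. -/
def OccursIn {A : Type*} (w : ℤ → A) {n : ℕ} (u : Fin n → A) (k : ℤ) (M : ℕ) : Prop :=
  ∃ j : ℤ, k ≤ j ∧ j + (n : ℤ) ≤ k + (M : ℤ) ∧ ∀ i : Fin n, u i = w (j + (i : ℤ))

/-- `M` is a recurrence bound for length-`n` factors of `w`. -/
def IsRecurrenceBound {A : Type*} (w : ℤ → A) (n M : ℕ) : Prop :=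
  ∀ u ∈ factorsZ w n, ∀ k : ℤ, OccursIn w u k M

def UniformlyRecurrent {A : Type*} (w : ℤ → A) : Prop :=
  ∀ n : ℕ, ∃ M : ℕ, IsRecurrenceBound w n M

/-- The recurrence function of `w`. -/
noncomputable def recurrenceFn {A : Type*} (w : ℤ → A) (n : ℕ) : ℕ :=
  sInf {M | IsRecurrenceBound w n M}

def PeriodicWord {A : Type*} (w : ℤ → A) : Prop :=
  ∃ k : ℤ, 1 ≤ k ∧ ∀ i : ℤ, w (i + k) = w i

/-- The `i`-th power of the shift: `(shiftFun i y) t = y (t + i)`. -/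
def shiftFun {A : Type*} (i : ℤ) (y : ℤ → A) : ℤ → A := fun t => y (t + i)

/-- Image of a set of words under the `i`-th power of the shift. -/
def shiftSet {A : Type*} (i : ℤ) (W : Set (ℤ → A)) : Set (ℤ → A) := shiftFun i '' W

/-!
The map `Fin.init` sending an `(m+1)`-factor to its prefix is onto the `m`-factors, so
`p_w` is nondecreasing, and since `p_w(0) ≥ 1`, the bound `p_w(n) ≤ n` forces
`p_w(m) = p_w(m+1)` for some `m < n`. Then `Fin.init` and `Fin.tail` are injective on
`(m+1)`-factors: every `m`-factor has a unique extension on either side. Two equal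
`m`-windows at positions `a < b` (pigeonhole) therefore stay equal under all shifts,
and `b - a` is a period of `w`.
-/

namespace MorseHedlund

variable {A : Type*} (w : ℤ → A)

def windowZ (m : ℕ) (k : ℤ) : Fin m → A := fun i => w (k + i)

theorem factorsZ_eq_range (m : ℕ) : factorsZ w m = Set.range (windowZ w m) := by
  ext u
  simp only [factorsZ, windowZ, Set.mem_ofPred_eq, Set.mem_range, funext_iff, eq_comm]

theorem windowZ_mem_factorsZ (m : ℕ) (k : ℤ) : windowZ w m k ∈ factorsZ w m := by
  rw [factorsZ_eq_range]
  exact Set.mem_range_self k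

theorem init_windowZ (m : ℕ) (k : ℤ) : Fin.init (windowZ w (m + 1) k) = windowZ w m k := rfl

theorem tail_windowZ (m : ℕ) (k : ℤ) :
    Fin.tail (windowZ w (m + 1) k) = windowZ w m (k + 1) := by
  funext i
  simp only [Fin.tail, windowZ, Fin.val_succ]
  push_cast
  ring_nf

theorem image_init_factorsZ (m : ℕ) : Fin.init '' factorsZ w (m + 1) = factorsZ w m := by
  rw [factorsZ_eq_range, factorsZ_eq_range, ← Set.range_comp]
  rfl

theorem image_tail_factorsZ (m : ℕ) : Fin.tail '' factorsZ w (m + 1) = factorsZ w m := by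
  rw [factorsZ_eq_range, factorsZ_eq_range, ← Set.range_comp]
  have hcomp : Fin.tail ∘ windowZ w (m + 1) = windowZ w m ∘ (· + 1) :=
    funext (tail_windowZ w m)
  rw [hcomp, (add_right_surjective 1).range_comp]

section Finite

variable [Finite A]

theorem complexityZ_pos (m : ℕ) : 0 < complexityZ w m :=
  (Set.ncard_pos (Set.toFinite _)).mpr ⟨_, windowZ_mem_factorsZ w m 0⟩

theorem complexityZ_le_succ (m : ℕ) : complexityZ w m ≤ complexityZ w (m + 1) := by
  rw [complexityZ, complexityZ, Nat.card_coe_set_eq, Nat.card_coe_set_eq,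
    ← image_init_factorsZ]
  exact Set.ncard_image_le

variable {w} {m : ℕ}

theorem injOn_init_of_complexityZ_eq (h : complexityZ w m = complexityZ w (m + 1)) :
    Set.InjOn Fin.init (factorsZ w (m + 1)) := by
  rw [← Set.ncard_image_iff, image_init_factorsZ]
  exact h

theorem injOn_tail_of_complexityZ_eq (h : complexityZ w m = complexityZ w (m + 1)) :
    Set.InjOn Fin.tail (factorsZ w (m + 1)) := by
  rw [← Set.ncard_image_iff, image_tail_factorsZ]
  exact h

theorem windowZ_add_eq_of_complexityZ_eq (h : complexityZ w m = complexityZ w (m + 1))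
    {a b : ℤ} (hab : windowZ w m a = windowZ w m b) (t : ℤ) :
    windowZ w (m + 1) (a + t) = windowZ w (m + 1) (b + t) := by
  have extend_right : ∀ {a b : ℤ}, windowZ w m a = windowZ w m b →
      windowZ w (m + 1) a = windowZ w (m + 1) b := fun hw =>
    injOn_init_of_complexityZ_eq h (windowZ_mem_factorsZ ..) (windowZ_mem_factorsZ ..) hw
  have extend_left : ∀ {a b : ℤ}, windowZ w m (a + 1) = windowZ w m (b + 1) →
      windowZ w (m + 1) a = windowZ w (m + 1) b := fun hw =>
    injOn_tail_of_complexityZ_eq h (windowZ_mem_factorsZ ..) (windowZ_mem_factorsZ ..)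
      (by rwa [tail_windowZ, tail_windowZ])
  suffices ∀ t : ℤ, windowZ w m (a + t) = windowZ w m (b + t) from extend_right (this t)
  intro t
  induction t using Int.induction_on with
  | zero => simpa using hab
  | succ i ih =>
    rw [← add_assoc, ← add_assoc, ← tail_windowZ, ← tail_windowZ, extend_right ih]
  | pred i ih =>
    rw [← init_windowZ w m (a + _), ← init_windowZ w m (b + _), extend_left]
    rwa [add_assoc, add_assoc, sub_add_cancel]

theorem periodicWord_of_complexityZ_eq (h : complexityZ w m = complexityZ w (m + 1)) :
    PeriodicWord w := by
  have period : ∀ {a b : ℤ}, windowZ w m a = windowZ w m b → ∀ i, w (i + (b - a)) = w i := by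
    intro a b hab i
    have hshift := congrFun (windowZ_add_eq_of_complexityZ_eq h hab (i - a)) 0
    simp only [windowZ, Fin.val_zero, Nat.cast_zero, add_zero, add_sub_cancel] at hshift
    rw [hshift, add_sub_left_comm, add_comm]
  obtain ⟨a, b, hne, hab⟩ := Finite.exists_ne_map_eq_of_infinite (windowZ w m)
  rcases hne.lt_or_gt with hlt | hlt
  · exact ⟨b - a, by omega, period hab⟩
  · exact ⟨a - b, by omega, period hab.symm⟩

end Finite

theorem exists_eq_succ_of_lt_add {f : ℕ → ℕ} (hf : ∀ m, f m ≤ f (m + 1)) :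
    ∀ {n : ℕ}, f n < f 0 + n → ∃ m < n, f m = f (m + 1)
  | 0, h => absurd h (by omega)
  | n + 1, h => by
    rcases (hf n).eq_or_lt with heq | hlt
    · exact ⟨n, n.lt_succ_self, heq⟩
    · obtain ⟨m, hm, heq⟩ := exists_eq_succ_of_lt_add hf (n := n) (by omega)
      exact ⟨m, by omega, heq⟩

end MorseHedlund

open MorseHedlund in
theorem stmt3_general {A : Type*} [Fintype A] (w : ℤ → A) (n : ℕ)
    (h : complexityZ w n ≤ n) :
    ∃ k : ℤ, 1 ≤ k ∧ ∀ i : ℤ, w (i + k) = w i := by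
  have hgap : complexityZ w n < complexityZ w 0 + n := by
    have := complexityZ_pos w 0
    omega
  obtain ⟨m, -, heq⟩ := exists_eq_succ_of_lt_add (complexityZ_le_succ w) hgap
  exact periodicWord_of_complexityZ_eq heq

/-- Morse–Hedlund, one direction: if `p_w(n) ≤ n` for some `n ≥ 1`,
then `w` is periodic. -/
theorem stmt3 {A : Type*} [Fintype A] (w : ℤ → A) (n : ℕ) (hn : 1 ≤ n)
    (h : complexityZ w n ≤ n) :
    ∃ k : ℤ, 1 ≤ k ∧ ∀ i : ℤ, w (i + k) = w i :=
  stmt3_general w n h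
end

section
/- Let x : ℤ → A be a uniformly recurrent non-periodic word over a finite alphabet A. Then the recurrence function satisfies R_x(n) ≥ p_x(n) + n for all n ∈ ℕ, and in particular R_x(n) ≥ 2n + 1. -/
/-!
A window of length `M` has only `M - n + 1` starting positions for factors of length `n`, so a
recurrence bound `M` gives `p(n) ≤ M - n + 1`. Equality would make every window of length `M`
list each factor exactly once; then the factor at `j` reappears at `j + (M - n + 1)` and not
before, so the word is periodic. The bound `2n + 1` then follows from Morse–Hedlund,
`p(n) ≥ n + 1`.
-/

section

variable {A : Type*} {w : ℤ → A} {n M : ℕ}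

def factorAt (w : ℤ → A) (n : ℕ) (j : ℤ) : Fin n → A := fun i => w (j + i)

theorem factorAt_mem_factorsZ (j : ℤ) : factorAt w n j ∈ factorsZ w n :=
  ⟨j, fun _ => rfl⟩

theorem factorsZ_eq_range : factorsZ w n = Set.range (factorAt w n) := by
  ext u
  exact ⟨fun ⟨j, hj⟩ => ⟨j, (funext hj).symm⟩, fun ⟨j, hj⟩ => hj ▸ factorAt_mem_factorsZ j⟩

theorem init_factorAt (j : ℤ) : Fin.init (factorAt w (n + 1) j) = factorAt w n j := rfl

theorem tail_factorAt (j : ℤ) : Fin.tail (factorAt w (n + 1) j) = factorAt w n (j + 1) := by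
  ext i
  simp only [Fin.tail, factorAt, Fin.val_succ]
  push_cast
  ring_nf

theorem factorAt_zero (hn : 0 < n) (j : ℤ) : factorAt w n j ⟨0, hn⟩ = w j := by
  simp [factorAt]

theorem factorAt_last (j : ℤ) : factorAt w (n + 1) j (Fin.last n) = w (j + n) := rfl

theorem image_init_factorsZ : Fin.init '' factorsZ w (n + 1) = factorsZ w n := by
  simp only [factorsZ_eq_range, ← Set.range_comp]
  rfl

def windowFactors (w : ℤ → A) (n : ℕ) (k : ℤ) (q : ℕ) : Fin q → factorsZ w n :=
  fun m => ⟨factorAt w n (k + m), factorAt_mem_factorsZ _⟩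

namespace IsRecurrenceBound

theorem le (h : IsRecurrenceBound w n M) : n ≤ M := by
  obtain ⟨j, hj, hjM, -⟩ := h _ (factorAt_mem_factorsZ (w := w) (n := n) 0) 0
  omega

theorem surjective_windowFactors (h : IsRecurrenceBound w n M) (k : ℤ) :
    Function.Surjective (windowFactors w n k (M - n + 1)) := by
  rintro ⟨u, hu⟩
  obtain ⟨j, hkj, hjM, hocc⟩ := h u hu k
  refine ⟨⟨(j - k).toNat, by omega⟩, Subtype.ext (funext fun i => ?_)⟩
  simp only [windowFactors, factorAt, hocc]
  congr 2
  omega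

theorem finite_factorsZ (h : IsRecurrenceBound w n M) : (factorsZ w n).Finite :=
  Set.finite_coe_iff.mp (Finite.of_surjective _ (h.surjective_windowFactors 0))

theorem complexityZ_le (h : IsRecurrenceBound w n M) : complexityZ w n ≤ M - n + 1 := by
  simpa [complexityZ] using Nat.card_le_card_of_surjective _ (h.surjective_windowFactors 0)

theorem periodicWord_of_complexityZ_eq (h : IsRecurrenceBound w n M) (hn : 0 < n)
    (hp : complexityZ w n = M - n + 1) : PeriodicWord w := by
  set q := M - n + 1
  have hbij (k : ℤ) : Function.Bijective (windowFactors w n k q) :=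
    (h.surjective_windowFactors k).bijective_of_nat_card_le (by rw [Nat.card_fin]; exact hp.ge)
  refine ⟨q, by omega, fun j => ?_⟩
  obtain ⟨m, hm⟩ := (hbij (j + 1)).2 ⟨factorAt w n j, factorAt_mem_factorsZ j⟩
  have hmq : (m : ℕ) + 1 = q := by
    by_contra hne
    have hrep : windowFactors w n j q ⟨m + 1, by omega⟩ = windowFactors w n j q ⟨0, by omega⟩ := by
      simpa [windowFactors, add_assoc, add_comm (1 : ℤ)] using hm
    exact absurd (Fin.mk.inj_iff.mp ((hbij j).1 hrep)) (by omega)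
  have hfac : factorAt w n (j + q) = factorAt w n j := by
    simpa [windowFactors, ← hmq, add_assoc, add_comm (1 : ℤ)] using congrArg Subtype.val hm
  simpa [factorAt_zero hn] using congrFun hfac ⟨0, hn⟩

theorem complexityZ_add_le (h : IsRecurrenceBound w n M) (hn : 0 < n) (hNP : ¬ PeriodicWord w) :
    complexityZ w n + n ≤ M := by
  have := h.complexityZ_le
  have := h.le
  have : complexityZ w n ≠ M - n + 1 := fun hp => hNP (h.periodicWord_of_complexityZ_eq hn hp)
  omega

end IsRecurrenceBound

theorem UniformlyRecurrent.finite_factorsZ (hUR : UniformlyRecurrent w) (n : ℕ) :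
    (factorsZ w n).Finite :=
  (hUR n).choose_spec.finite_factorsZ

theorem UniformlyRecurrent.periodicWord_of_eventually_periodic (hUR : UniformlyRecurrent w)
    {q N : ℤ} (hq : 0 < q) (hper : ∀ j ≥ N, w (j + q) = w j) : PeriodicWord w := by
  lift q to ℕ using hq.le
  refine ⟨q, by omega, fun i => ?_⟩
  obtain ⟨M, hM⟩ := hUR (q + 1)
  obtain ⟨j, hNj, -, hocc⟩ := hM _ (factorAt_mem_factorsZ (w := w) i) N
  have h0 := hocc 0
  have hlast := hocc (Fin.last q)
  simp only [factorAt, Fin.val_zero, Fin.val_last, Nat.cast_zero, add_zero] at h0 hlast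
  rw [hlast, hper j hNj, h0]

theorem injOn_init_of_complexityZ_succ_le (hfin : (factorsZ w (n + 1)).Finite)
    (hle : complexityZ w (n + 1) ≤ complexityZ w n) :
    Set.InjOn Fin.init (factorsZ w (n + 1)) := by
  refine Set.injOn_of_ncard_image_eq (le_antisymm (Set.ncard_image_le hfin) ?_) hfin
  simpa [complexityZ, image_init_factorsZ] using hle

theorem factorAt_succ_eq_of_injOn_init (hinj : Set.InjOn Fin.init (factorsZ w (n + 1)))
    {j j' : ℤ} (h : factorAt w n j = factorAt w n j') :
    factorAt w (n + 1) j = factorAt w (n + 1) j' :=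
  hinj (factorAt_mem_factorsZ j) (factorAt_mem_factorsZ j') (by simpa [init_factorAt] using h)

/-- Morse–Hedlund: if `p(n + 1) ≤ p(n)`, each factor of length `n` has a unique extension to
the right, so two equal factors at `a < b` make `w` eventually periodic with period `b - a`. -/
theorem UniformlyRecurrent.complexityZ_lt_complexityZ_succ (hUR : UniformlyRecurrent w)
    (hNP : ¬ PeriodicWord w) (n : ℕ) : complexityZ w n < complexityZ w (n + 1) := by
  by_contra! hle
  have hinj := injOn_init_of_complexityZ_succ_le (hUR.finite_factorsZ (n + 1)) hle
  obtain ⟨a, -, b, -, hne, hab⟩ := Set.infinite_univ.exists_ne_map_eq_of_mapsTo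
    (fun j _ => factorAt_mem_factorsZ j) (hUR.finite_factorsZ n)
  wlog hlt : a < b generalizing a b
  · exact this b a hne.symm hab.symm (by omega)
  have hshift : ∀ j ≥ a, factorAt w n j = factorAt w n (j + (b - a)) := by
    refine Int.leInduction (by simpa using hab) fun j _ hj => ?_
    have := congrArg Fin.tail (factorAt_succ_eq_of_injOn_init hinj hj)
    simpa [tail_factorAt, add_right_comm] using this
  refine hNP (hUR.periodicWord_of_eventually_periodic (N := a + n) (sub_pos.mpr hlt)
    fun j hj => ?_)
  have := congrFun (factorAt_succ_eq_of_injOn_init hinj (hshift (j - n) (by omega))) (Fin.last n)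
  rw [factorAt_last, factorAt_last, sub_add_cancel, show j - n + (b - a) + n = j + (b - a) by ring]
    at this
  exact this.symm

theorem UniformlyRecurrent.add_one_le_complexityZ (hUR : UniformlyRecurrent w)
    (hNP : ¬ PeriodicWord w) (n : ℕ) : n + 1 ≤ complexityZ w n := by
  induction n with
  | zero =>
    rw [complexityZ, Nat.card_coe_set_eq]
    exact (Set.ncard_pos (hUR.finite_factorsZ 0)).mpr ⟨_, factorAt_mem_factorsZ 0⟩
  | succ n ih => have := hUR.complexityZ_lt_complexityZ_succ hNP n; omega

end

theorem stmt4_general {A : Type*} (x : ℤ → A)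
    (hUR : UniformlyRecurrent x) (hNP : ¬ PeriodicWord x) (n : ℕ) (hn : 1 ≤ n) :
    complexityZ x n + n ≤ recurrenceFn x n ∧ 2 * n + 1 ≤ recurrenceFn x n := by
  have hR : IsRecurrenceBound x n (recurrenceFn x n) := Nat.sInf_mem (hUR n)
  have hp := hR.complexityZ_add_le hn hNP
  have hMH := hUR.add_one_le_complexityZ hNP n
  exact ⟨hp, by omega⟩

/-- For a uniformly recurrent non-periodic word,
`R_x(n) ≥ p_x(n) + n ≥ 2n + 1`. -/
theorem stmt4 {A : Type*} [Fintype A] (x : ℤ → A)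
    (hUR : UniformlyRecurrent x) (hNP : ¬ PeriodicWord x) (n : ℕ) (hn : 1 ≤ n) :
    complexityZ x n + n ≤ recurrenceFn x n ∧ 2 * n + 1 ≤ recurrenceFn x n :=
  stmt4_general x hUR hNP n hn
end

section
/- Let (L_j) be a strictly increasing sequence of positive integers, and for each j let x^{(j)} ∈ A^{L_j} be a word over a finite alphabet A. Suppose for each j there is K_j with 2 ≤ K_j ≤ L_{j+1} − L_j such that x^{(j)} equals the K_j-th factor of length L_j of x^{(j+1)}. Fix M_0 with 1 ≤ M_0 ≤ L_0 and define M_{j+1} = M_j + K_j − 1. Then there is a unique two-sided infinite word x ∈ A^ℤ lying in the intersection over all j of the cylinder sets ⟪x^{(j)}⟫_{M_j}, and for every n, the set of n-factors of x equals the union over j of the sets of n-factors of x^{(j)}. -/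
/-- The cylinder set `⟪u⟫_M ⊆ A^ℤ` of a finite word `u`, placed so that its `M`-th letter
(1-indexed) sits at position `0`. -/
def cylL {A : Type*} (u : List A) (M : ℕ) : Set (ℤ → A) :=
  {y | ∀ i : Fin u.length, y ((i : ℤ) + 1 - (M : ℤ)) = u.get i}

/-- The set of `n`-factors of a two-sided infinite word, as lists. -/
def factorsZL {A : Type*} (y : ℤ → A) (n : ℕ) : Set (List A) :=
  {u | ∃ k : ℤ, u = List.ofFn (fun i : Fin n => y (k + (i : ℤ)))}

/-- The set of `n`-factors of a finite word, as lists. -/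
def factorsLL {A : Type*} (w : List A) (n : ℕ) : Set (List A) :=
  {u | ∃ k : ℕ, k + n ≤ w.length ∧ u = (w.drop k).take n}

/-- the limit-word lemma. Given nested finite words `x⁽ʲ⁾` of lengths `L_j`,
with `x⁽ʲ⁾` the `K_j`-th `L_j`-factor of `x⁽ʲ⁺¹⁾` (`2 ≤ K_j ≤ L_{j+1} − L_j`), base points
`M_0 ∈ [1, L_0]`, `M_{j+1} = M_j + K_j − 1`, there is a unique `x ∈ A^ℤ` in the intersection
of the cylinders `⟪x⁽ʲ⁾⟫_{M_j}`, and its `n`-factors are exactly `⋃_j F_n(x⁽ʲ⁾)`. -/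
theorem stmt5 {A : Type*} [Fintype A] (L K M : ℕ → ℕ) (x : ℕ → List A)
    (hL : StrictMono L) (hL0 : 0 < L 0)
    (hlen : ∀ j, (x j).length = L j)
    (hK2 : ∀ j, 2 ≤ K j) (hKle : ∀ j, K j ≤ L (j + 1) - L j)
    (hfac : ∀ j, x j = ((x (j + 1)).drop (K j - 1)).take (L j))
    (hM01 : 1 ≤ M 0) (hM0L : M 0 ≤ L 0)
    (hMrec : ∀ j, M (j + 1) = M j + K j - 1) :
    ∃ y : ℤ → A, (∀ j, y ∈ cylL (x j) (M j)) ∧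
      (∀ z : ℤ → A, (∀ j, z ∈ cylL (x j) (M j)) → z = y) ∧
      (∀ n : ℕ, factorsZL y n = ⋃ j, factorsLL (x j) n) := by
  classical
  have hx0ne : x 0 ≠ [] := by
    intro h
    have := hlen 0
    rw [h] at this
    simp at this
    omega
  set d : A := (x 0).head hx0ne with hd
  have hLL : ∀ j, L j + K j ≤ L (j + 1) := by
    intro j
    have h1 := hKle j
    have h2 := (hL (lt_add_one j)).le
    omega
  -- M j ≥ j + 1
  have hMge : ∀ j, j + 1 ≤ M j := by
    intro j
    induction j with
    | zero => omega
    | succ j ih => have := hK2 j; rw [hMrec j]; omega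
  -- M j + j ≤ L j
  have hLMge : ∀ j, M j + j ≤ L j := by
    intro j
    induction j with
    | zero => simpa using hM0L
    | succ j ih => have := hK2 j; have := hLL j; rw [hMrec j]; omega
  -- window predicate
  set W : ℕ → ℤ → Prop := fun j p => 1 - (M j : ℤ) ≤ p ∧ p ≤ (L j : ℤ) - M j with hW
  have hWself : ∀ p : ℤ, W p.natAbs p := by
    intro p
    have h1 := hMge p.natAbs
    have h2 := hLMge p.natAbs
    constructor <;> omega
  have hWmono : ∀ j j', j ≤ j' → ∀ p, W j p → W j' p := by
    intro j j' hjj'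
    induction j' , hjj' using Nat.le_induction with
    | base => intro p hp; exact hp
    | succ j' hjj' ih =>
      intro p hp
      obtain ⟨h1, h2⟩ := ih p hp
      have := hK2 j'
      have := hLL j'
      have := hMrec j'
      have := hMge j'
      constructor <;> omega
  -- option-valued getter
  set g : ℕ → ℤ → Option A := fun j p => (x j)[(p + M j - 1).toNat]? with hg
  have hstep : ∀ j (p : ℤ), W j p → g j p = g (j + 1) p := by
    intro j p hp
    obtain ⟨h1, h2⟩ := hp
    have hMj := hMge j
    have hK := hK2 j
    have hMr := hMrec j
    simp only [hg]
    conv_lhs => rw [hfac j]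
    rw [List.getElem?_take_of_lt (by omega), List.getElem?_drop]
    congr 1
    omega
  have hcons : ∀ j j', j ≤ j' → ∀ p, W j p → g j p = g j' p := by
    intro j j' hjj'
    induction j' , hjj' using Nat.le_induction with
    | base => intro p hp; rfl
    | succ j' hjj' ih =>
      intro p hp
      rw [ih p hp, hstep j' p (hWmono j j' hjj' p hp)]
  -- the infinite word
  set y : ℤ → A := fun p => ((x p.natAbs)[(p + M p.natAbs - 1).toNat]?).getD d with hy0
  -- master lemma: on the window of x j, y is computed by x j
  have hy : ∀ j (p : ℤ), W j p →
      ∀ (h : (p + M j - 1).toNat < (x j).length), y p = (x j)[(p + M j - 1).toNat] := by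
    intro j p hp h
    have e1 : g p.natAbs p = g (max j p.natAbs) p :=
      hcons _ _ (le_max_right _ _) p (hWself p)
    have e2 : g j p = g (max j p.natAbs) p :=
      hcons _ _ (le_max_left _ _) p hp
    have : y p = (g j p).getD d := by
      simp only [hy0, hg] at e1 e2 ⊢
      rw [e1, ← e2]
    rw [this]
    simp only [hg]
    rw [List.getElem?_eq_getElem h]
    rfl
  have hidx : ∀ j (p : ℤ), W j p → (p + M j - 1).toNat < (x j).length := by
    intro j p hp
    obtain ⟨h1, h2⟩ := hp
    have := hMge j
    rw [hlen j]
    omega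
  -- cylinder membership
  have hcyl : ∀ j, y ∈ cylL (x j) (M j) := by
    intro j i
    have hiL : (i : ℕ) < L j := by rw [← hlen j]; exact i.isLt
    have hMj := hMge j
    have hpW : W j ((i : ℤ) + 1 - M j) := by constructor <;> omega
    have hidx' := hidx j _ hpW
    rw [hy j _ hpW hidx']
    have : ((i : ℤ) + 1 - M j + M j - 1).toNat = (i : ℕ) := by omega
    simp only [this]
    simp [List.get_eq_getElem]
  refine ⟨y, hcyl, ?_, ?_⟩
  · -- uniqueness
    intro z hz
    funext p
    set j := p.natAbs with hj
    have hpW := hWself p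
    have hidx' := hidx j p hpW
    have hMj := hMge j
    have := hz j ⟨(p + M j - 1).toNat, hidx'⟩
    simp only [List.get_eq_getElem] at this
    have hcast : (((p + M j - 1).toNat : ℤ)) + 1 - (M j : ℤ) = p := by
      obtain ⟨h1, h2⟩ := hpW; omega
    rw [hcast] at this
    rw [this, hy j p hpW hidx']
  · -- factors
    intro n
    ext u
    simp only [factorsZL, factorsLL, Set.mem_setOf_eq, Set.mem_iUnion]
    constructor
    · rintro ⟨k, rfl⟩
      refine ⟨k.natAbs + n, (k + M (k.natAbs + n) - 1).toNat, ?_, ?_⟩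
      · set j := k.natAbs + n with hjdef
        have h1 := hMge j
        have h2 := hLMge j
        rw [hlen j]
        omega
      · set j := k.natAbs + n with hjdef
        have h1 := hMge j
        have h2 := hLMge j
        have hk0 : (0:ℤ) ≤ k + M j - 1 := by omega
        apply List.ext_getElem
        · rw [List.length_ofFn, List.length_take, List.length_drop, hlen j]
          omega
        · intro i hi1 hi2
          rw [List.getElem_ofFn, List.getElem_take, List.getElem_drop]
          have hiln : i < n := by simpa using hi1
          have hpW : W j (k + (i : ℤ)) := by constructor <;> omega
          have hidx' := hidx j _ hpW
          rw [hy j _ hpW hidx']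
          congr 1
          omega
    · rintro ⟨j, k, hkn, rfl⟩
      refine ⟨(k : ℤ) + 1 - M j, ?_⟩
      have hMj := hMge j
      have hLj := hlen j
      apply List.ext_getElem
      · rw [List.length_ofFn, List.length_take, List.length_drop]
        omega
      · intro i hi1 hi2
        have hiln : i < n := by simpa using hi2
        rw [List.getElem_ofFn, List.getElem_take, List.getElem_drop]
        have hpW : W j ((k : ℤ) + 1 - M j + (i : ℤ)) := by constructor <;> omega
        have hidx' := hidx j _ hpW
        rw [hy j _ hpW hidx']
        congr 1
        omega
end

section
/- Let x ∈ A^ℤ be uniformly recurrent non-periodic with orbit closure X, and let m ≥ max{(R_x(4) − 1)/2, 5}. Then there exists a family D of m-cylinders of X such that the sets σ^i(U), for U ∈ D and −2 ≤ i ≤ 2, are pairwise disjoint, and |D| ≥ p_x(2m − 7)/9. -/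
/-- The cylinder set determined by a word `u` of length `2m+1` centred at the origin:
`{ y : y i = u (i + m) for −m ≤ i ≤ m }`. -/
def cylC {A : Type*} (m : ℕ) (u : Fin (2 * m + 1) → A) : Set (ℤ → A) :=
  {y | ∀ i : Fin (2 * m + 1), y ((i : ℤ) - (m : ℤ)) = u i}

/-- `U` is an `m`-cylinder of `X`: a nonempty intersection of `X` with a centred cylinder. -/
def IsMCylinder {A : Type*} (X : Set (ℤ → A)) (m : ℕ) (U : Set (ℤ → A)) : Prop :=
  (∃ u : Fin (2 * m + 1) → A, U = X ∩ cylC m u) ∧ U.Nonempty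

set_option linter.unusedSectionVars false
set_option linter.unusedVariables false
set_option linter.unusedTactic false

section Aux
variable {A : Type*} [Fintype A] [TopologicalSpace A] [DiscreteTopology A]

lemma window_mem (x : ℤ → A) (n : ℕ) (k : ℤ) :
    (fun i : Fin n => x (k + (i : ℤ))) ∈ factorsZ x n := ⟨k, fun _ => rfl⟩

lemma recurrence_bound (x : ℤ → A) (hUR : UniformlyRecurrent x) (n M : ℕ)
    (hM : recurrenceFn x n ≤ M) : IsRecurrenceBound x n M := by
  obtain ⟨M0, h0⟩ := hUR n
  have hmem : M0 ∈ {M | IsRecurrenceBound x n M} := h0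
  have hbase : IsRecurrenceBound x n (recurrenceFn x n) := Nat.sInf_mem ⟨M0, hmem⟩
  intro u hu k
  obtain ⟨j, h1, h2, h3⟩ := hbase u hu k
  refine ⟨j, h1, ?_, h3⟩
  have : (recurrenceFn x n : ℤ) ≤ (M : ℤ) := by exact_mod_cast hM
  omega

lemma factor_of_closure (x : ℤ → A) (X : Set (ℤ → A))
    (hX : X = closure (Set.range fun n : ℤ => shiftFun n x))
    {y : ℤ → A} (hy : y ∈ X) (a : ℤ) (L : ℕ) :
    ∃ k : ℤ, ∀ i : ℕ, i < L → y (a + i) = x (k + i) := by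
  subst hX
  have hO : IsOpen {z : ℤ → A | ∀ i : Fin L, z (a + (i : ℤ)) = y (a + (i : ℤ))} := by
    have he : {z : ℤ → A | ∀ i : Fin L, z (a + (i : ℤ)) = y (a + (i : ℤ))} =
        ⋂ i : Fin L, (fun z : ℤ → A => z (a + (i : ℤ))) ⁻¹' {y (a + (i : ℤ))} := by
      ext z; simp [Set.mem_iInter]
    rw [he]
    exact isOpen_iInter_of_finite fun i =>
      (continuous_apply _).isOpen_preimage _ (isOpen_discrete _)
  obtain ⟨z, hz1, hz2⟩ := mem_closure_iff.mp hy _ hO (fun _ => rfl)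
  obtain ⟨ν, rfl⟩ := hz2
  refine ⟨a + ν, fun i hi => ?_⟩
  have h := hz1 ⟨i, hi⟩
  simp only [shiftFun, Set.mem_setOf_eq] at h
  rw [← h]
  congr 1
  push_cast
  ring

lemma restrict_mem (x : ℤ → A) (n : ℕ) (u : Fin (n+1) → A) (hu : u ∈ factorsZ x (n+1)) :
    (fun i : Fin n => u i.castSucc) ∈ factorsZ x n := by
  obtain ⟨k, hk⟩ := hu
  exact ⟨k, fun i => by simpa using hk i.castSucc⟩

lemma restrict_surj (x : ℤ → A) (n : ℕ) :
    Function.Surjective (fun u : ↥(factorsZ x (n+1)) =>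
      (⟨fun i : Fin n => u.1 i.castSucc, restrict_mem x n u.1 u.2⟩ : ↥(factorsZ x n))) := by
  rintro ⟨v, k, hk⟩
  refine ⟨⟨fun i => x (k + (i : ℤ)), window_mem x (n+1) k⟩, ?_⟩
  apply Subtype.ext
  funext i
  simp [hk i]

lemma complexityZ_mono (x : ℤ → A) (n : ℕ) : complexityZ x n ≤ complexityZ x (n + 1) :=
  Nat.card_le_card_of_surjective _ (restrict_surj x n)

lemma complexityZ_zero (x : ℤ → A) : complexityZ x 0 = 1 := by
  have h : factorsZ x 0 = Set.univ := by
    ext u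
    simp only [Set.mem_univ, iff_true]
    exact ⟨0, fun i => i.elim0⟩
  rw [complexityZ, h]
  simp [Nat.card_eq_fintype_card]

lemma extend_eq (x : ℤ → A) (n : ℕ) (h : complexityZ x (n+1) ≤ complexityZ x n) :
    ∀ s t : ℤ, (∀ i : ℕ, i < n → x (s + i) = x (t + i)) → ∀ j : ℕ, x (s + j) = x (t + j) := by
  have hinj : Function.Injective (fun u : ↥(factorsZ x (n+1)) =>
      (⟨fun i : Fin n => u.1 i.castSucc, restrict_mem x n u.1 u.2⟩ : ↥(factorsZ x n))) := by
    have hcard : Nat.card ↥(factorsZ x (n+1)) = Nat.card ↥(factorsZ x n) :=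
      le_antisymm h (complexityZ_mono x n)
    exact ((Nat.bijective_iff_surjective_and_card _).mpr ⟨restrict_surj x n, hcard⟩).1
  have hstep : ∀ s t : ℤ, (∀ i : ℕ, i < n → x (s + i) = x (t + i)) → x (s + n) = x (t + n) := by
    intro s t hw
    have he : (⟨fun i : Fin n => (fun i : Fin (n+1) => x (s + (i:ℤ))) i.castSucc,
          restrict_mem x n _ (window_mem x (n+1) s)⟩ : ↥(factorsZ x n)) =
        ⟨fun i : Fin n => (fun i : Fin (n+1) => x (t + (i:ℤ))) i.castSucc,
          restrict_mem x n _ (window_mem x (n+1) t)⟩ := by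
      apply Subtype.ext
      funext i
      simpa using hw i i.isLt
    have h2 := hinj (a₁ := ⟨_, window_mem x (n+1) s⟩) (a₂ := ⟨_, window_mem x (n+1) t⟩) he
    have h3 := congrFun (congrArg Subtype.val h2) (Fin.last n)
    simpa using h3
  intro s t hw j
  induction j using Nat.strong_induction_on with
  | _ j ih =>
    by_cases hj : j < n
    · exact hw j hj
    · have h1 : ∀ i : ℕ, i < n → x ((s + ((j - n : ℕ) : ℤ)) + i) = x ((t + ((j - n : ℕ) : ℤ)) + i) := by
        intro i hi
        have h2 := ih ((j - n) + i) (by omega)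
        have c1 : s + ((j - n : ℕ) : ℤ) + i = s + (((j - n) + i : ℕ) : ℤ) := by push_cast; ring
        have c2 : t + ((j - n : ℕ) : ℤ) + i = t + (((j - n) + i : ℕ) : ℤ) := by push_cast; ring
        rw [c1, c2]
        exact h2
      have h2 := hstep _ _ h1
      have c1 : s + ((j - n : ℕ) : ℤ) + n = s + (j : ℤ) := by push_cast; omega
      have c2 : t + ((j - n : ℕ) : ℤ) + n = t + (j : ℤ) := by push_cast; omega
      rw [c1, c2] at h2
      exact h2

lemma evp (x : ℤ → A) (n : ℕ) (h : complexityZ x (n+1) ≤ complexityZ x n) :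
    ∃ a : ℤ, ∃ q : ℕ, 1 ≤ q ∧ ∀ s : ℤ, a ≤ s → x (s + q) = x s := by
  obtain ⟨a, b, hab, hg⟩ := Fintype.exists_ne_map_eq_of_card_lt
    (fun r : Fin (Fintype.card (Fin n → A) + 1) => fun i : Fin n => x ((r : ℤ) + (i : ℤ)))
    (by simp)
  obtain ⟨A0, B0, hlt, hw⟩ : ∃ A0 B0 : ℤ, A0 < B0 ∧ ∀ i : ℕ, i < n → x (A0 + i) = x (B0 + i) := by
    rcases lt_or_gt_of_ne hab with hl | hl
    · exact ⟨a, b, by exact_mod_cast hl, fun i hi => by simpa using congrFun hg ⟨i, hi⟩⟩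
    · exact ⟨b, a, by exact_mod_cast hl, fun i hi => by simpa using (congrFun hg ⟨i, hi⟩).symm⟩
  have hext := extend_eq x n h A0 B0 hw
  refine ⟨A0, (B0 - A0).toNat, by omega, fun s hs => ?_⟩
  have h1 := hext ((s - A0).toNat)
  have : x s = x (s + ((B0 - A0).toNat : ℤ)) := by
    convert h1 using 2 <;> omega
  exact this.symm

lemma periodic_of_evp (x : ℤ → A) (hUR : UniformlyRecurrent x)
    (a : ℤ) (q : ℕ) (hq : 1 ≤ q) (hper : ∀ s : ℤ, a ≤ s → x (s + q) = x s) :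
    PeriodicWord x := by
  refine ⟨q, by exact_mod_cast hq, fun t => ?_⟩
  obtain ⟨M, hM⟩ := hUR (q+1)
  obtain ⟨j, hj1, hj2, hj3⟩ := hM (fun i : Fin (q+1) => x (t + (i : ℤ))) (window_mem x (q+1) t) a
  have h0 := hj3 ⟨0, by omega⟩
  have hqq := hj3 ⟨q, by omega⟩
  simp only at h0 hqq
  have hjp : x (j + q) = x j := hper j hj1
  have c0 : ((⟨0, by omega⟩ : Fin (q+1)) : ℤ) = 0 := rfl
  have cq : ((⟨q, by omega⟩ : Fin (q+1)) : ℤ) = (q : ℤ) := rfl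
  rw [c0] at h0
  rw [cq] at hqq
  simp only [add_zero] at h0
  rw [hqq, hjp, ← h0]

lemma periodic_of_four (x : ℤ → A) (hUR : UniformlyRecurrent x)
    (d : ℕ) (k : ℤ) (hd1 : 1 ≤ d) (hd4 : d ≤ 4)
    (H : ∀ u ∈ factorsZ x 4, ∃ r : ℕ, r < d ∧ ∀ i : Fin 4, u i = x (k + r + (i : ℤ))) :
    PeriodicWord x := by
  have hp4 : complexityZ x 4 ≤ 4 := by
    have hsub : factorsZ x 4 ⊆
        Set.range (fun r : Fin d => fun i : Fin 4 => x (k + (r : ℤ) + (i : ℤ))) := by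
      intro u hu
      obtain ⟨r, hr, hru⟩ := H u hu
      refine ⟨⟨r, hr⟩, ?_⟩
      funext i
      exact (hru i).symm
    calc complexityZ x 4 = (factorsZ x 4).ncard := Nat.card_coe_set_eq _
      _ ≤ (Set.range (fun r : Fin d => fun i : Fin 4 => x (k + (r : ℤ) + (i : ℤ)))).ncard :=
          Set.ncard_le_ncard hsub (Set.toFinite _)
      _ ≤ (Set.univ : Set (Fin d)).ncard := by
          rw [← Set.image_univ]; exact Set.ncard_image_le (Set.toFinite _)
      _ = d := by simp [Set.ncard_univ]
      _ ≤ 4 := hd4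
  have hex : ∃ n, n < 4 ∧ complexityZ x (n+1) ≤ complexityZ x n := by
    by_contra hc
    push_neg at hc
    have h0 := complexityZ_zero x
    have h1 := hc 0 (by omega)
    have h2 := hc 1 (by omega)
    have h3 := hc 2 (by omega)
    have h4 := hc 3 (by omega)
    norm_num at h1 h2 h3 h4
    omega
  obtain ⟨n, _, hn⟩ := hex
  obtain ⟨a, q, hq, hper⟩ := evp x n hn
  exact periodic_of_evp x hUR a q hq hper

lemma no_self_overlap (x : ℤ → A) (hUR : UniformlyRecurrent x) (hNP : ¬ PeriodicWord x)
    (X : Set (ℤ → A)) (hX : X = closure (Set.range fun n : ℤ => shiftFun n x))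
    (m : ℕ) (hm : recurrenceFn x 4 ≤ 2 * m + 1) (hm5 : 5 ≤ m)
    {z : ℤ → A} (hz : z ∈ X) (d : ℕ) (hd1 : 1 ≤ d) (hd4 : d ≤ 4) (a : ℤ)
    (hza : ∀ s : ℤ, a ≤ s → s ≤ a + 2 * (m : ℤ) → z (s + d) = z s) : False := by
  obtain ⟨k, hk⟩ := factor_of_closure x X hX hz a (2*m+1+d)
  have hxper : ∀ s : ℤ, k ≤ s → s ≤ k + 2*(m:ℤ) → x (s + d) = x s := by
    intro s hs1 hs2
    have h1 := hk (s - k).toNat (by omega)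
    have h2 := hk ((s - k).toNat + d) (by omega)
    have h3 := hza (a + ((s - k).toNat : ℤ)) (by omega) (by omega)
    have c1 : (k + (((s - k).toNat : ℕ) : ℤ)) = s := by omega
    have c2 : (k + ((((s - k).toNat + d : ℕ)) : ℤ)) = s + d := by push_cast; omega
    have c3 : (a + ((((s - k).toNat + d : ℕ)) : ℤ)) = (a + (((s - k).toNat : ℕ) : ℤ)) + d := by
      push_cast; ring
    rw [c1] at h1
    rw [c2, c3] at h2
    rw [← h2, h3, h1]
  have hR : IsRecurrenceBound x 4 (2*m+1) := recurrence_bound x hUR 4 (2*m+1) hm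
  have hocc : ∀ u ∈ factorsZ x 4, ∃ r : ℕ, r < d ∧ ∀ i : Fin 4, u i = x (k + r + (i : ℤ)) := by
    intro u hu
    obtain ⟨j, hj1, hj2, hj3⟩ := hR u hu k
    have key : ∀ t : ℕ, ∀ j : ℤ, (j - k).toNat = t → k ≤ j → j + 4 ≤ k + 2*(m:ℤ) + 1 →
        (∀ i : Fin 4, u i = x (j + (i:ℤ))) → ∃ r : ℕ, r < d ∧ ∀ i : Fin 4, u i = x (k + r + (i:ℤ)) := by
      intro t
      induction t using Nat.strong_induction_on with
      | _ t ih =>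
        intro j hjt hjk hjm hji
        by_cases hcase : j < k + d
        · refine ⟨(j - k).toNat, by omega, fun i => ?_⟩
          rw [show (k + (((j - k).toNat : ℕ) : ℤ)) = j by omega]
          exact hji i
        · have hji' : ∀ i : Fin 4, u i = x ((j - d) + (i:ℤ)) := by
            intro i
            have hi := i.isLt
            have hb := hxper (j - d + (i:ℤ)) (by omega) (by omega)
            rw [hji i, ← hb]
            congr 1
            ring
          exact ih (t - d) (by omega) (j - d) (by omega) (by omega) (by omega) hji'
    have hjm : j + 4 ≤ k + 2*(m:ℤ) + 1 := by
      have := hj2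
      push_cast at this
      omega
    exact key (j - k).toNat j rfl hj1 hjm hj3
  exact hNP (periodic_of_four x hUR d k hd1 hd4 hocc)

end Aux

def ConfP {A : Type*} (X : Set (ℤ → A)) (m : ℕ) (u v : Fin (2*m+1) → A) : Prop :=
  ∃ d : ℤ, -4 ≤ d ∧ d ≤ 4 ∧ ∃ z ∈ X, (∀ i : Fin (2*m+1), u i = z ((i : ℤ) - m)) ∧
    (∀ i : Fin (2*m+1), v i = z ((i : ℤ) - m + d)) ∧ (u ≠ v ∨ d ≠ 0)


/-- for `m ≥ max{(R_x(4) − 1)/2, 5}` there is a family `D` of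
`m`-cylinders of `X` whose shifts `σ^i(U)` (`U ∈ D`, `−2 ≤ i ≤ 2`) are pairwise
disjoint, with `|D| ≥ p_x(2m − 7)/9`. -/
theorem stmt12 {A : Type*} [Fintype A] [TopologicalSpace A] [DiscreteTopology A]
    (x : ℤ → A) (hUR : UniformlyRecurrent x) (hNP : ¬ PeriodicWord x)
    (X : Set (ℤ → A)) (hX : X = closure (Set.range fun n : ℤ => shiftFun n x))
    (m : ℕ) (hm : recurrenceFn x 4 ≤ 2 * m + 1) (hm5 : 5 ≤ m) :
    ∃ D : Set (Set (ℤ → A)), (∀ U ∈ D, IsMCylinder X m U) ∧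
      (∀ U ∈ D, ∀ V ∈ D, ∀ i j : ℤ, -2 ≤ i → i ≤ 2 → -2 ≤ j → j ≤ 2 →
        (U ≠ V ∨ i ≠ j) → Disjoint (shiftSet i U) (shiftSet j V)) ∧
      complexityZ x (2 * m - 7) ≤ 9 * D.ncard := by
  classical
  have hxX : ∀ k : ℤ, shiftFun k x ∈ X := fun k => by rw [hX]; exact subset_closure ⟨k, rfl⟩
  have hne : ∀ u ∈ factorsZ x (2*m+1), (X ∩ cylC m u).Nonempty := by
    rintro u ⟨k, hk⟩
    refine ⟨shiftFun (k + m) x, hxX _, fun i => ?_⟩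
    show x (((i:ℤ) - m) + (k + m)) = u i
    rw [hk i]
    congr 1
    ring
  have hcylinj : ∀ u ∈ factorsZ x (2*m+1), ∀ v : Fin (2*m+1) → A,
      X ∩ cylC m u = X ∩ cylC m v → u = v := by
    intro u hu v he
    obtain ⟨y, hyX, hyc⟩ := hne u hu
    have hyv : y ∈ X ∩ cylC m v := by rw [← he]; exact ⟨hyX, hyc⟩
    funext i
    rw [← hyc i, hyv.2 i]
  have hConfSelf : ∀ u : Fin (2*m+1) → A, ¬ ConfP X m u u := by
    rintro u ⟨d, hdl, hdr, z, hzX, hu, hv, hne'⟩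
    have hd0 : d ≠ 0 := by
      rcases hne' with h | h
      · exact absurd rfl h
      · exact h
    have hzz : ∀ s : ℤ, -(m:ℤ) ≤ s → s ≤ m → z (s + d) = z s := by
      intro s h1 h2
      have hlt : (s + m).toNat < 2*m+1 := by omega
      have e1 := hu ⟨(s + m).toNat, hlt⟩
      have e2 := hv ⟨(s + m).toNat, hlt⟩
      have hival : ((((s + m).toNat : ℕ) : ℤ)) - (m:ℤ) = s := by omega
      rw [show ((⟨(s + m).toNat, hlt⟩ : Fin (2*m+1)) : ℤ) = (((s + m).toNat : ℕ) : ℤ) from rfl,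
        hival] at e1 e2
      exact e2.symm.trans e1
    rcases lt_or_gt_of_ne hd0 with hneg | hpos
    · refine no_self_overlap x hUR hNP X hX m hm hm5 hzX (-d).toNat (by omega) (by omega)
        (-(m:ℤ) + d) ?_
      intro s hs1 hs2
      have hh := hzz (s - d) (by omega) (by omega)
      rw [show (s - d) + d = s by ring] at hh
      rw [show ((((-d).toNat : ℕ)) : ℤ) = -d by omega, show s + -d = s - d by ring]
      exact hh.symm
    · refine no_self_overlap x hUR hNP X hX m hm hm5 hzX d.toNat (by omega) (by omega)
        (-(m:ℤ)) ?_
      intro s hs1 hs2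
      rw [show (((d.toNat : ℕ)) : ℤ) = d by omega]
      exact hzz s (by omega) (by omega)
  -- Zorn
  obtain ⟨D', hD'max⟩ := zorn_subset
      {T : Set (Fin (2*m+1) → A) | T ⊆ factorsZ x (2*m+1) ∧ ∀ u ∈ T, ∀ v ∈ T, ¬ ConfP X m u v}
      (by
        intro c hcS hchain
        refine ⟨⋃₀ c, ⟨Set.sUnion_subset fun s hs => (hcS hs).1, ?_⟩,
          fun s hs => Set.subset_sUnion_of_mem hs⟩
        rintro u ⟨s1, hs1, hu⟩ v ⟨s2, hs2, hv⟩
        rcases eq_or_ne s1 s2 with rfl | hne'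
        · exact (hcS hs1).2 u hu v hv
        · rcases hchain hs1 hs2 hne' with hsub | hsub
          · exact (hcS hs2).2 u (hsub hu) v hv
          · exact (hcS hs1).2 u hu v (hsub hv))
  obtain ⟨⟨hD'L, hIndep⟩, hmax⟩ := hD'max
  -- covering
  have hcover : ∀ w ∈ factorsZ x (2*m - 7), ∃ v ∈ D', ∃ e : Fin 9,
      ∀ s : Fin (2*m - 7), w s = v ⟨(s : ℕ) + (e : ℕ), by have := s.isLt; have := e.isLt; omega⟩ := by
    rintro w ⟨k', hk'⟩
    set U : Fin (2*m+1) → A := fun i => x ((k' - 4) + (i : ℤ)) with hUdef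
    have hUL : U ∈ factorsZ x (2*m+1) := ⟨k' - 4, fun i => rfl⟩
    by_cases hUD : U ∈ D'
    · refine ⟨U, hUD, ⟨4, by omega⟩, fun s => ?_⟩
      rw [hk' s]
      show x (k' + (s:ℤ)) = x ((k' - 4) + ((((s:ℕ) + 4 : ℕ)) : ℤ))
      congr 1
      push_cast
      ring
    · have hnotS : ¬ ((insert U D') ⊆ factorsZ x (2*m+1) ∧
          ∀ u ∈ insert U D', ∀ v ∈ insert U D', ¬ ConfP X m u v) := by
        intro hS
        exact hUD (hmax hS (Set.subset_insert _ _) (Set.mem_insert _ _))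
      push_neg at hnotS
      obtain ⟨u', hu', v', hv', hC⟩ := hnotS (Set.insert_subset hUL hD'L)
      rcases Set.mem_insert_iff.mp hu' with rfl | hu'D
      · rcases Set.mem_insert_iff.mp hv' with rfl | hv'D
        · exact absurd hC (hConfSelf _)
        · -- ConfP X m U v'
          obtain ⟨d, hdl, hdr, z, hzX, hcu, hcv, _⟩ := hC
          have hlt1 : ∀ s : Fin (2*m-7), (s:ℕ) + 4 < 2*m+1 := by
            intro s; have := s.isLt; omega
          have hlt2 : ∀ s : Fin (2*m-7), (s:ℕ) + (4 - d).toNat < 2*m+1 := by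
            intro s; have := s.isLt; omega
          refine ⟨v', hv'D, ⟨(4 - d).toNat, by omega⟩, fun s => ?_⟩
          have h1 := hcu ⟨(s:ℕ) + 4, hlt1 s⟩
          have h2 := hcv ⟨(s:ℕ) + (4 - d).toNat, hlt2 s⟩
          rw [hk' s, h2]
          rw [show (((⟨(s:ℕ) + (4 - d).toNat, hlt2 s⟩ : Fin (2*m+1))) : ℤ) - m + d
              = ((((s:ℕ) + 4 : ℕ)) : ℤ) - m from by
            show ((((s:ℕ) + (4 - d).toNat : ℕ)) : ℤ) - m + d = _
            push_cast
            omega]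
          rw [show ((((s:ℕ) + 4 : ℕ)) : ℤ) - (m:ℤ)
              = ((⟨(s:ℕ) + 4, hlt1 s⟩ : Fin (2*m+1)) : ℤ) - m from rfl, ← h1]
          show x (k' + (s:ℤ)) = x ((k' - 4) + ((((s:ℕ) + 4 : ℕ)) : ℤ))
          congr 1
          push_cast
          ring
      · rcases Set.mem_insert_iff.mp hv' with rfl | hv'D
        · -- ConfP X m u' U
          obtain ⟨d, hdl, hdr, z, hzX, hcu, hcv, _⟩ := hC
          have hlt1 : ∀ s : Fin (2*m-7), (s:ℕ) + 4 < 2*m+1 := by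
            intro s; have := s.isLt; omega
          have hlt2 : ∀ s : Fin (2*m-7), (s:ℕ) + (4 + d).toNat < 2*m+1 := by
            intro s; have := s.isLt; omega
          refine ⟨u', hu'D, ⟨(4 + d).toNat, by omega⟩, fun s => ?_⟩
          have h1 := hcv ⟨(s:ℕ) + 4, hlt1 s⟩
          have h2 := hcu ⟨(s:ℕ) + (4 + d).toNat, hlt2 s⟩
          rw [hk' s, h2]
          rw [show (((⟨(s:ℕ) + (4 + d).toNat, hlt2 s⟩ : Fin (2*m+1))) : ℤ) - (m:ℤ)
              = ((⟨(s:ℕ) + 4, hlt1 s⟩ : Fin (2*m+1)) : ℤ) - m + d from by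
            show ((((s:ℕ) + (4 + d).toNat : ℕ)) : ℤ) - (m:ℤ)
              = ((((s:ℕ) + 4 : ℕ)) : ℤ) - m + d
            push_cast
            omega]
          rw [← h1]
          show x (k' + (s:ℤ)) = x ((k' - 4) + ((((s:ℕ) + 4 : ℕ)) : ℤ))
          congr 1
          push_cast
          ring
        · exact absurd hC (hIndep u' hu'D v' hv'D)
  -- conclusion
  refine ⟨(fun u => X ∩ cylC m u) '' D', ?_, ?_, ?_⟩
  · rintro _ ⟨u, huD, rfl⟩
    exact ⟨⟨u, rfl⟩, hne u (hD'L huD)⟩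
  · rintro _ ⟨u, huD, rfl⟩ _ ⟨v, hvD, rfl⟩ i j hi1 hi2 hj1 hj2 hneq
    by_contra hnd
    rw [Set.not_disjoint_iff] at hnd
    obtain ⟨y, hyi, hyj⟩ := hnd
    obtain ⟨z1, ⟨hz1X, hz1c⟩, hz1y⟩ := hyi
    obtain ⟨z2, ⟨hz2X, hz2c⟩, hz2y⟩ := hyj
    have hz2eq : ∀ t : ℤ, z2 t = z1 (t + (i - j)) := by
      intro t
      have e1 := congrFun hz1y (t - j)
      have e2 := congrFun hz2y (t - j)
      simp only [shiftFun] at e1 e2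
      rw [show t - j + j = t by ring] at e2
      rw [e2, ← e1]
      congr 1
      ring
    refine hIndep u huD v hvD ⟨i - j, by omega, by omega, z1, hz1X,
      fun i' => (hz1c i').symm, fun i' => ?_, ?_⟩
    · rw [← hz2c i', hz2eq]
    · rcases hneq with hUV | hij
      · left
        intro hEq
        exact hUV (by rw [hEq])
      · right
        omega
  · -- counting
    choose vfun hv1 efun hv3 using hcover
    have hinj : Function.Injective (fun w : ↥(factorsZ x (2*m - 7)) =>
        ((⟨vfun w.1 w.2, hv1 w.1 w.2⟩ : ↥D'), efun w.1 w.2)) := by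
      rintro ⟨w1, hw1⟩ ⟨w2, hw2⟩ heq
      have hveq : vfun w1 hw1 = vfun w2 hw2 :=
        congrArg (fun p : ↥D' × Fin 9 => (p.1 : Fin (2*m+1) → A)) heq
      have hee : efun w1 hw1 = efun w2 hw2 := congrArg Prod.snd heq
      apply Subtype.ext
      funext s
      show w1 s = w2 s
      rw [hv3 w1 hw1 s, hv3 w2 hw2 s, hveq]
      congr 1
      apply Fin.ext
      simp [hee]
    have hcard : Nat.card ↥(factorsZ x (2*m - 7)) ≤ Nat.card (↥D' × Fin 9) :=
      Nat.card_le_card_of_injective _ hinj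
    have h9 : Nat.card (↥D' × Fin 9) = D'.ncard * 9 := by
      rw [Nat.card_prod, Nat.card_coe_set_eq]
      simp [Nat.card_eq_fintype_card]
    have himg : ((fun u => X ∩ cylC m u) '' D').ncard = D'.ncard :=
      Set.ncard_image_of_injOn (fun u hu v hv he => hcylinj u (hD'L hu) v he)
    calc complexityZ x (2*m - 7) = Nat.card ↥(factorsZ x (2*m - 7)) := rfl
      _ ≤ Nat.card (↥D' × Fin 9) := hcard
      _ = D'.ncard * 9 := h9
      _ = 9 * ((fun u => X ∩ cylC m u) '' D').ncard := by rw [himg]; ring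
end

section
/- Let (X, σ) be a minimal subshift and let U ⊆ X be a nonempty clopen set such that σ^{−1}(U), U, σ(U) are pairwise disjoint. Define f_U ∈ Homeo(X) by f_U(y) = σ(y) if y ∈ U ∪ σ^{−1}(U), f_U(y) = σ^{−2}(y) if y ∈ σ(U), and f_U(y) = y otherwise. Then f_U is a well-defined element of the topological full group ⟦σ⟧, and f_U lies in the derived (commutator) subgroup ⟦σ⟧′. Specifically, f_U = f_U^{−1} h_U^{−1} f_U h_U, where h_U swaps σ^{−1}(U) and U via σ^{±1} and is the identity elsewhere. -/
/-- The group of self-homeomorphisms of a space, under composition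
(`(g * h) x = g (h x)`). -/
instance homeomorphGroup {Y : Type*} [TopologicalSpace Y] : Group (Y ≃ₜ Y) where
  mul g h := h.trans g
  one := Homeomorph.refl Y
  inv := Homeomorph.symm
  mul_assoc _ _ _ := Homeomorph.ext fun _ => rfl
  one_mul _ := Homeomorph.ext fun _ => rfl
  mul_one _ := Homeomorph.ext fun _ => rfl
  inv_mul_cancel g := Homeomorph.ext fun y => g.symm_apply_apply y

/-- Membership in the topological full group of the shift on `X`: `g` admits a continuous
orbit cocycle `f` with `g p = σ^(f p) p`. -/
def InFullGroup {A : Type*} [TopologicalSpace A] (X : Set (ℤ → A)) (g : ↥X ≃ₜ ↥X) : Prop :=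
  ∃ f : ↥X → ℤ, Continuous f ∧ ∀ p : ↥X, ((g p : ℤ → A)) = shiftFun (f p) (p : ℤ → A)

/-- `g` is the homeomorphism `f_W`: it acts as `σ` on `W ∪ σ⁻¹(W)`, as `σ⁻²` on `σ(W)`,
and as the identity elsewhere. -/
def IsFOn {A : Type*} [TopologicalSpace A] (X W : Set (ℤ → A)) (g : ↥X ≃ₜ ↥X) : Prop :=
  ∀ p : ↥X,
    ((p : ℤ → A) ∈ W ∪ shiftSet (-1) W → ((g p : ℤ → A)) = shiftFun 1 (p : ℤ → A)) ∧
    ((p : ℤ → A) ∈ shiftSet 1 W → ((g p : ℤ → A)) = shiftFun (-2) (p : ℤ → A)) ∧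
    ((p : ℤ → A) ∉ W ∪ shiftSet (-1) W ∪ shiftSet 1 W → g p = p)

/-- `h` is the homeomorphism `h_W`: it swaps `σ⁻¹(W)` and `W` via `σ^{±1}` and is the
identity elsewhere. -/
def IsHOn {A : Type*} [TopologicalSpace A] (X W : Set (ℤ → A)) (h : ↥X ≃ₜ ↥X) : Prop :=
  ∀ p : ↥X,
    ((p : ℤ → A) ∈ shiftSet (-1) W → ((h p : ℤ → A)) = shiftFun 1 (p : ℤ → A)) ∧
    ((p : ℤ → A) ∈ W → ((h p : ℤ → A)) = shiftFun (-1) (p : ℤ → A)) ∧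
    ((p : ℤ → A) ∉ shiftSet (-1) W ∪ W → h p = p)

/-!
`h_U` exchanges `σ⁻¹(U)` and `U`, and `h_{σ(U)}` exchanges `U` and `σ(U)`; both are involutions
in `⟦σ⟧`, given by the continuous cocycle `±1` on two disjoint clopen sets. Their product is
`f_U`, which moves every point of `σ⁻¹(U) ∪ U ∪ σ(U)` cyclically through these three sets and
fixes the rest, so `f_U³ = 1`. For involutions `a`, `b` with `(ab)³ = 1` the group identity
`ab = ⁅(ab)⁻¹, a⁻¹⁆` holds, which for `a = h_U`, `b = h_{σ(U)}` is `f_U = f_U⁻¹ h_U⁻¹ f_U h_U`.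
-/

open scoped commutatorElement in
lemma mul_eq_commutatorElement_of_pow_three {G : Type*} [Group G] {a b : G} (ha : a * a = 1)
    (hb : b * b = 1) (hab : (a * b) ^ 3 = 1) : a * b = ⁅(a * b)⁻¹, a⁻¹⁆ :=
  calc a * b = a * (a * b) ^ 3 * b := by rw [hab, mul_one]
    _ = (a * a) * (b * a * b * a) * (b * b) := by simp only [pow_three, mul_assoc]
    _ = b⁻¹ * a⁻¹ * b * a := by
      rw [ha, hb, inv_eq_of_mul_eq_one_left ha, inv_eq_of_mul_eq_one_left hb, one_mul, mul_one]
    _ = ⁅(a * b)⁻¹, a⁻¹⁆ := by rw [commutatorElement_def]; group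

@[simp] lemma homeomorphGroup_mul_apply {Y : Type*} [TopologicalSpace Y]
    (g h : Y ≃ₜ Y) (y : Y) : (g * h) y = g (h y) := rfl

lemma continuous_if_isClopen {α β : Type*} [TopologicalSpace α] [TopologicalSpace β]
    {s : Set α} [DecidablePred (· ∈ s)] (hs : IsClopen s) {f g : α → β}
    (hf : Continuous f) (hg : Continuous g) : Continuous fun a => if a ∈ s then f a else g a :=
  Continuous.if (by simp [hs.frontier_eq]) hf hg

section ShiftDynamics

variable {A : Type*}

@[simp] lemma shiftFun_shiftFun (i j : ℤ) (y : ℤ → A) :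
    shiftFun i (shiftFun j y) = shiftFun (i + j) y := by
  funext t; simp [shiftFun, add_assoc]

@[simp] lemma shiftFun_zero (y : ℤ → A) : shiftFun 0 y = y := by
  funext t; simp [shiftFun]

@[simp] lemma mem_shiftSet {W : Set (ℤ → A)} {i : ℤ} {y : ℤ → A} :
    y ∈ shiftSet i W ↔ shiftFun (-i) y ∈ W :=
  ⟨by rintro ⟨w, hw, rfl⟩; simpa, fun h => ⟨_, h, by simp⟩⟩

@[simp] lemma shiftSet_shiftSet (i j : ℤ) (W : Set (ℤ → A)) :
    shiftSet i (shiftSet j W) = shiftSet (i + j) W := by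
  ext y; simp [add_comm]

@[simp] lemma shiftSet_zero (W : Set (ℤ → A)) : shiftSet 0 W = W := by
  ext y; simp

def ShiftInvariant (X : Set (ℤ → A)) : Prop :=
  ∀ i : ℤ, ∀ p ∈ X, shiftFun i p ∈ X

def shiftOn {X : Set (ℤ → A)} (hX : ShiftInvariant X) (i : ℤ) (p : X) : X :=
  ⟨shiftFun i p, hX i p p.2⟩

@[simp] lemma coe_shiftOn {X : Set (ℤ → A)} (hX : ShiftInvariant X) (i : ℤ) (p : X) :
    (shiftOn hX i p : ℤ → A) = shiftFun i p := rfl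

section Swap

variable {X : Set (ℤ → A)} (hX : ShiftInvariant X) (W : Set (ℤ → A))

open Classical in
noncomputable def swapFun (p : X) : X :=
  if (p : ℤ → A) ∈ shiftSet (-1) W then shiftOn hX 1 p
  else if (p : ℤ → A) ∈ W then shiftOn hX (-1) p else p

variable {W}

lemma coe_swapFun_of_mem_shiftSet {p : X} (hp : (p : ℤ → A) ∈ shiftSet (-1) W) :
    (swapFun hX W p : ℤ → A) = shiftFun 1 p := by
  simp [swapFun, hp]

lemma coe_swapFun_of_mem (hd : Disjoint (shiftSet (-1) W) W) {p : X} (hp : (p : ℤ → A) ∈ W) :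
    (swapFun hX W p : ℤ → A) = shiftFun (-1) p := by
  simp [swapFun, hp, Set.disjoint_right.mp hd hp]

lemma swapFun_of_notMem {p : X} (hp : (p : ℤ → A) ∉ shiftSet (-1) W ∪ W) :
    swapFun hX W p = p := by
  simp_all [swapFun]

lemma swapFun_involutive (hd : Disjoint (shiftSet (-1) W) W) :
    Function.Involutive (swapFun hX W) := by
  intro p
  by_cases hL : (p : ℤ → A) ∈ shiftSet (-1) W
  · have e := coe_swapFun_of_mem_shiftSet hX hL
    have hM : (swapFun hX W p : ℤ → A) ∈ W := by simpa [e] using hL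
    ext1; simp [coe_swapFun_of_mem hX hd hM, e]
  by_cases hM : (p : ℤ → A) ∈ W
  · have e := coe_swapFun_of_mem hX hd hM
    have hL : (swapFun hX W p : ℤ → A) ∈ shiftSet (-1) W := by simpa [e] using hM
    ext1; simp [coe_swapFun_of_mem_shiftSet hX hL, e]
  have hfix := swapFun_of_notMem hX (W := W) (p := p) (by simp [hL, hM])
  rw [hfix, hfix]

end Swap

variable [TopologicalSpace A]

lemma continuous_shiftFun (i : ℤ) : Continuous (shiftFun i : (ℤ → A) → ℤ → A) :=
  continuous_pi fun t => continuous_apply (t + i)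

lemma shiftInvariant_closure_range (x : ℤ → A) :
    ShiftInvariant (closure (Set.range fun n : ℤ => shiftFun n x)) := fun i _ hp =>
  map_mem_closure (continuous_shiftFun i) hp (by rintro _ ⟨n, rfl⟩; exact ⟨i + n, by simp⟩)

lemma continuous_shiftOn {X : Set (ℤ → A)} (hX : ShiftInvariant X) (i : ℤ) :
    Continuous (shiftOn hX i) :=
  ((continuous_shiftFun i).comp continuous_subtype_val).subtype_mk _

lemma IsClopen.preimage_val_shiftSet {X W : Set (ℤ → A)} (hX : ShiftInvariant X)
    (hW : IsClopen (Subtype.val ⁻¹' W : Set X)) (i : ℤ) :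
    IsClopen (Subtype.val ⁻¹' shiftSet i W : Set X) := by
  convert hW.preimage (continuous_shiftOn hX (-i)) using 1
  ext p; simp

lemma InFullGroup.mul {X : Set (ℤ → A)} {g h : X ≃ₜ X} (hg : InFullGroup X g)
    (hh : InFullGroup X h) : InFullGroup X (g * h) := by
  obtain ⟨a, ha, hga⟩ := hg
  obtain ⟨b, hb, hhb⟩ := hh
  exact ⟨fun p => a (h p) + b p, (ha.comp h.continuous).add hb, fun p => by simp [hga, hhb]⟩

section SwapHomeo

variable {X W : Set (ℤ → A)}

open Classical in
lemma continuous_swapFun (hX : ShiftInvariant X) (hW : IsClopen (Subtype.val ⁻¹' W : Set X)) :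
    Continuous (swapFun hX W) :=
  continuous_if_isClopen (hW.preimage_val_shiftSet hX (-1)) (continuous_shiftOn hX 1)
    (continuous_if_isClopen hW (continuous_shiftOn hX (-1)) continuous_id)

noncomputable def swapHomeo (hX : ShiftInvariant X) (hW : IsClopen (Subtype.val ⁻¹' W : Set X))
    (hd : Disjoint (shiftSet (-1) W) W) : X ≃ₜ X where
  toEquiv := (swapFun_involutive hX hd).toPerm
  continuous_toFun := continuous_swapFun hX hW
  continuous_invFun := continuous_swapFun hX hW

variable (hX : ShiftInvariant X) (hW : IsClopen (Subtype.val ⁻¹' W : Set X))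
  (hd : Disjoint (shiftSet (-1) W) W)

lemma isHOn_swapHomeo : IsHOn X W (swapHomeo hX hW hd) := fun _ =>
  ⟨coe_swapFun_of_mem_shiftSet hX, coe_swapFun_of_mem hX hd, swapFun_of_notMem hX⟩

lemma swapHomeo_mul_self : swapHomeo hX hW hd * swapHomeo hX hW hd = 1 :=
  Homeomorph.ext (swapFun_involutive hX hd)

end SwapHomeo

open Classical in
lemma IsHOn.inFullGroup {X W : Set (ℤ → A)} {h : X ≃ₜ X} (hh : IsHOn X W h)
    (hX : ShiftInvariant X) (hW : IsClopen (Subtype.val ⁻¹' W : Set X)) : InFullGroup X h := by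
  refine ⟨fun p =>
      if (p : ℤ → A) ∈ shiftSet (-1) W then 1 else if (p : ℤ → A) ∈ W then -1 else 0,
    continuous_if_isClopen (hW.preimage_val_shiftSet hX (-1)) continuous_const
      (continuous_if_isClopen hW continuous_const continuous_const), fun p => ?_⟩
  obtain ⟨hL, hM, hO⟩ := hh p
  dsimp only
  split_ifs with h1 h2
  · exact hL h1
  · exact hM h2
  · simp [hO (by simp_all)]

section ThreeCycle

variable {X U : Set (ℤ → A)}

lemma IsHOn.mul_isFOn {h h' : X ≃ₜ X} (hh : IsHOn X U h) (hh' : IsHOn X (shiftSet 1 U) h')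
    (hLM : Disjoint (shiftSet (-1) U) U) (hMR : Disjoint U (shiftSet 1 U))
    (hLR : Disjoint (shiftSet (-1) U) (shiftSet 1 U)) : IsFOn X U (h * h') := by
  intro p
  refine ⟨?_, fun hR => ?_, fun hO => ?_⟩
  · rintro (hM | hL)
    · have e : (h' p : ℤ → A) = shiftFun 1 p := (hh' p).1 (by simpa using hM)
      have hR : (h' p : ℤ → A) ∈ shiftSet 1 U := by simpa [e] using hM
      have hfix : h (h' p) = h' p := (hh (h' p)).2.2 fun hmem => hmem.elim
        (Set.disjoint_left.mp hLR · hR) (Set.disjoint_left.mp hMR · hR)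
      simp [hfix, e]
    · have hfix : h' p = p := (hh' p).2.2 fun hmem => hmem.elim
        (fun hM => Set.disjoint_left.mp hLM hL (by simpa using hM)) (Set.disjoint_left.mp hLR hL)
      simpa [hfix] using (hh p).1 hL
  · have e : (h' p : ℤ → A) = shiftFun (-1) p := (hh' p).2.1 hR
    have hM : (h' p : ℤ → A) ∈ U := by simpa [e] using hR
    simp [(hh (h' p)).2.1 hM, e]
  · simp only [Set.mem_union, not_or] at hO
    have hfix : h' p = p := (hh' p).2.2 (by simp [hO])
    simp [hfix, (hh p).2.2 (by simp [hO])]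

lemma IsFOn.pow_three {g : X ≃ₜ X} (hg : IsFOn X U g) : g ^ 3 = 1 := by
  refine Homeomorph.ext fun p => Subtype.ext ?_
  change (g (g (g p)) : ℤ → A) = p
  by_cases hL : (p : ℤ → A) ∈ shiftSet (-1) U
  · have e1 := (hg p).1 (Or.inr hL)
    have e2 := (hg (g p)).1 (Or.inl (by simpa [e1] using hL))
    have e3 := (hg (g (g p))).2.1 (by simpa [e2, e1] using hL)
    simp [e3, e2, e1]
  by_cases hM : (p : ℤ → A) ∈ U
  · have e1 := (hg p).1 (Or.inl hM)
    have e2 := (hg (g p)).2.1 (by simpa [e1] using hM)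
    have e3 := (hg (g (g p))).1 (Or.inr (by simpa [e2, e1] using hM))
    simp [e3, e2, e1]
  by_cases hR : (p : ℤ → A) ∈ shiftSet 1 U
  · have e1 := (hg p).2.1 hR
    have e2 := (hg (g p)).1 (Or.inr (by simpa [e1] using hR))
    have e3 := (hg (g (g p))).1 (Or.inl (by simpa [e2, e1] using hR))
    simp [e3, e2, e1]
  have hfix := (hg p).2.2 (by simp only [Set.mem_union]; tauto)
  rw [hfix, hfix, hfix]

end ThreeCycle

end ShiftDynamics

theorem stmt13_general {A : Type*} [TopologicalSpace A]
    (x : ℤ → A)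
    (X : Set (ℤ → A)) (hX : X = closure (Set.range fun n : ℤ => shiftFun n x))
    (U : Set (ℤ → A))
    (hclopen : IsClopen (Subtype.val ⁻¹' U : Set ↥X))
    (hdisj : ∀ i j : ℤ, -1 ≤ i → i ≤ 1 → -1 ≤ j → j ≤ 1 → i ≠ j →
      Disjoint (shiftSet i U) (shiftSet j U)) :
    ∃ g h : ↥X ≃ₜ ↥X, IsFOn X U g ∧ IsHOn X U h ∧
      InFullGroup X g ∧ InFullGroup X h ∧
      g = g⁻¹ * h⁻¹ * g * h ∧
      g ∈ ⁅Subgroup.closure {k : ↥X ≃ₜ ↥X | InFullGroup X k},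
           Subgroup.closure {k : ↥X ≃ₜ ↥X | InFullGroup X k}⁆ := by
  have hXinv : ShiftInvariant X := hX ▸ shiftInvariant_closure_range x
  have hLM : Disjoint (shiftSet (-1) U) U := by simpa using hdisj (-1) 0
  have hMR : Disjoint U (shiftSet 1 U) := by simpa using hdisj 0 1
  have hLR : Disjoint (shiftSet (-1) U) (shiftSet 1 U) := by simpa using hdisj (-1) 1
  have hclopen' := hclopen.preimage_val_shiftSet hXinv 1
  have hMR' : Disjoint (shiftSet (-1) (shiftSet 1 U)) (shiftSet 1 U) := by simpa using hMR
  have hH := isHOn_swapHomeo hXinv hclopen hLM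
  have hH' := isHOn_swapHomeo hXinv hclopen' hMR'
  have hF := hH.mul_isFOn hH' hLM hMR hLR
  have hrel := mul_eq_commutatorElement_of_pow_three (swapHomeo_mul_self hXinv hclopen hLM)
    (swapHomeo_mul_self hXinv hclopen' hMR') hF.pow_three
  have hHfull := hH.inFullGroup hXinv hclopen
  have hFfull := hHfull.mul (hH'.inFullGroup hXinv hclopen')
  refine ⟨_, _, hF, hH, hFfull, hHfull,
    by simpa only [commutatorElement_def, inv_inv] using hrel, ?_⟩
  rw [hrel]
  exact Subgroup.commutator_mem_commutator (inv_mem (Subgroup.subset_closure hFfull))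
    (inv_mem (Subgroup.subset_closure hHfull))

/-- for a nonempty clopen `U ⊆ X` with `σ⁻¹(U), U, σ(U)` pairwise disjoint,
the map `f_U` is a well-defined element of the topological full group `⟦σ⟧`, lies in the
derived subgroup `⟦σ⟧′`, and satisfies `f_U = f_U⁻¹ h_U⁻¹ f_U h_U`. -/
theorem stmt13 {A : Type*} [Fintype A] [TopologicalSpace A] [DiscreteTopology A]
    (x : ℤ → A) (hUR : UniformlyRecurrent x) (hNP : ¬ PeriodicWord x)
    (X : Set (ℤ → A)) (hX : X = closure (Set.range fun n : ℤ => shiftFun n x))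
    (U : Set (ℤ → A)) (hUX : U ⊆ X) (hUne : U.Nonempty)
    (hclopen : IsClopen (Subtype.val ⁻¹' U : Set ↥X))
    (hdisj : ∀ i j : ℤ, -1 ≤ i → i ≤ 1 → -1 ≤ j → j ≤ 1 → i ≠ j →
      Disjoint (shiftSet i U) (shiftSet j U)) :
    ∃ g h : ↥X ≃ₜ ↥X, IsFOn X U g ∧ IsHOn X U h ∧
      InFullGroup X g ∧ InFullGroup X h ∧
      g = g⁻¹ * h⁻¹ * g * h ∧
      g ∈ ⁅Subgroup.closure {k : ↥X ≃ₜ ↥X | InFullGroup X k},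
           Subgroup.closure {k : ↥X ≃ₜ ↥X | InFullGroup X k}⁆ :=
  stmt13_general x X hX U hclopen hdisj
end
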